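/- Let r be an interval rule and let r' be obtained from r by inserting one interval event E (a left extension into the antecedent or a right extension into the consequent, with some chosen relations to the intervals of r). Then every E-sequence containing an occurrence of r' also contains an occurrence of r: deleting the matched occurrence of E from an occurrence of r' yields an occurrence of r, since all pairwise relations among the remaining matched intervals are unchanged. Hence seq(r') ⊆ seq(r) and sup(r') ≤ sup(r). -/
import Mathlib


open scoped Classical

/-- An interval event: a label, a start time `st`, a finish time `ft`, and a utility. -/
structure IEvent where
  label : ℕ
  st : ℝ
  ft : ℝ
  u : ℝ

/-- The seven Allen relations between an ordered pair of intervals. -/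
inductive Allen
  | before | meets | overlaps | finishedBy | contains | starts | equals
  deriving DecidableEq

/-- The Allen relation of an ordered pair of interval events, determined by their
start and finish times. -/
noncomputable def allenRel (a b : IEvent) : Allen :=
  if a.ft < b.st then .before
  else if a.ft = b.st then .meets
  else if a.st < b.st then
    if a.ft < b.ft then .overlaps
    else if a.ft = b.ft then .finishedBy
    else .contains
  else if a.ft < b.ft then .starts
  else .equals

/-- `occursAt L S j` : the list of interval events `L` (with its pairwise temporal
relations) occurs in the E-sequence `S` via the strictly increasing index embedding `j`,
matching labels and all pairwise Allen relations. -/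
def occursAt (L S : List IEvent) (j : Fin L.length → Fin S.length) : Prop :=
  StrictMono j ∧
  (∀ k, (L.get k).label = (S.get (j k)).label) ∧
  ∀ a b : Fin L.length, a < b →
    allenRel (L.get a) (L.get b) = allenRel (S.get (j a)) (S.get (j b))

/-- `L` occurs in the E-sequence `S`. -/
def occursIn (L S : List IEvent) : Prop := ∃ j, occursAt L S j

/-- An interval rule `X → Y`: a nonempty antecedent and a nonempty consequent. -/
structure IRule where
  X : List IEvent
  Y : List IEvent
  hX : X ≠ []
  hY : Y ≠ []

/-- The number of E-sequences of the database `D` in which the event list `L` occurs. -/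
noncomputable def seqCount (D : List (List IEvent)) (L : List IEvent) : ℕ :=
  (D.filter (fun S => decide (occursIn L S))).length

/-- The total utility of an E-sequence. -/
noncomputable def seqUtility (S : List IEvent) : ℝ := (S.map IEvent.u).sum


theorem sublist_insertIdx' {α : Type*} (l : List α) (n : ℕ) (a : α) :
    List.Sublist l (l.insertIdx n a) := by
  induction n generalizing l with
  | zero => exact List.sublist_cons_self a l
  | succ n ih =>
    cases l with
    | nil => simp
    | cons b t => simpa [List.insertIdx_succ_cons] using (ih t).cons₂ b

theorem occursIn_of_sublist {L L' S : List IEvent} (hs : List.Sublist L L')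
    (h : occursIn L' S) : occursIn L S := by
  obtain ⟨f, hf⟩ := List.sublist_iff_exists_fin_orderEmbedding_get_eq.mp hs
  obtain ⟨j, hj1, hj2, hj3⟩ := h
  refine ⟨fun k => j (f k), hj1.comp f.strictMono, fun k => ?_, fun a b hab => ?_⟩
  · rw [hf k]; exact hj2 (f k)
  · rw [hf a, hf b]; exact hj3 (f a) (f b) (f.strictMono hab)

/-- **Extension does not increase support.**
Let `r` be an interval rule and let `r'` be obtained from `r` by inserting one interval
event `E` (a left extension into the antecedent or a right extension into the
consequent, at some position `p`).  Then every E-sequence containing an occurrence of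
`r'` also contains an occurrence of `r` (deleting the matched occurrence of `E` yields
an occurrence of `r`, since all pairwise relations among the remaining matched intervals
are unchanged).  Hence `seq(r') ⊆ seq(r)` and `sup(r') ≤ sup(r)`. -/
theorem extension_antimonotone_support
    (D : List (List IEvent)) (r r' : IRule) (E : IEvent) (p : ℕ)
    (h : r'.X ++ r'.Y = (r.X ++ r.Y).insertIdx p E) :
    (∀ S : List IEvent, occursIn (r'.X ++ r'.Y) S → occursIn (r.X ++ r.Y) S) ∧
    seqCount D (r'.X ++ r'.Y) ≤ seqCount D (r.X ++ r.Y) ∧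
    (seqCount D (r'.X ++ r'.Y) : ℝ) / (D.length : ℝ) ≤
      (seqCount D (r.X ++ r.Y) : ℝ) / (D.length : ℝ) := by
  have key : ∀ S : List IEvent, occursIn (r'.X ++ r'.Y) S → occursIn (r.X ++ r.Y) S := by
    intro S hS
    exact occursIn_of_sublist (h ▸ sublist_insertIdx' (r.X ++ r.Y) p E) hS
  have hcount : seqCount D (r'.X ++ r'.Y) ≤ seqCount D (r.X ++ r.Y) := by
    apply List.Sublist.length_le
    apply List.monotone_filter_right
    intro S hS
    simp only [decide_eq_true_eq] at hS ⊢
    exact key S hS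
  refine ⟨key, hcount, ?_⟩
  rcases Nat.eq_zero_or_pos D.length with h0 | h0
  · simp [h0]
  · have : (0:ℝ) < D.length := by exact_mod_cast h0
    gcongr
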